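/- Every root of a quaternion polynomial is a root of its companion polynomial: if f ∈ ℍ[X] and λ ∈ ℍ satisfies f(λ) = 0, then eval λ C_f = 0. -/
import Mathlib

open Polynomial

/-- The conjugate polynomial `conj(f) = ∑ₖ (star aₖ) Xᵏ`. -/
noncomputable def polyConj (f : Polynomial (Quaternion ℝ)) : Polynomial (Quaternion ℝ) :=
  f.sum fun k a => C (star a) * X ^ k

/-- The companion polynomial `C_f = conj(f) · f`. -/
noncomputable def companion (f : Polynomial (Quaternion ℝ)) : Polynomial (Quaternion ℝ) :=
  polyConj f * f

lemma eval_mul_right_root (p q : Polynomial (Quaternion ℝ)) (lam : Quaternion ℝ)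
    (h : q.eval lam = 0) : (p * q).eval lam = 0 := by
  induction p using Polynomial.induction_on' with
  | add a b ha hb => rw [add_mul, eval_add, ha, hb, add_zero]
  | monomial n a =>
      rw [← C_mul_X_pow_eq_monomial, mul_assoc, eval_C_mul,
        show (X ^ n * q : Polynomial (Quaternion ℝ)) = q * X ^ n from
          (Polynomial.commute_X_pow q n),
        eval_mul_X_pow, h, zero_mul, mul_zero]

theorem root_is_root_of_companion
    (f : Polynomial (Quaternion ℝ)) (lam : Quaternion ℝ)
    (h : Polynomial.eval lam f = 0) :
    Polynomial.eval lam (companion f) = 0 :=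
  eval_mul_right_root _ _ _ h
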